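/- For an R-bimodule M, the two constructions (Frobenius extension → Frobenius coring, via Δ(s) = s·e and θ = ε ∘ m; Frobenius coring → Frobenius extension, via m(c ⊗ d) = c₍₁₎θ(c₍₂₎ ⊗ d) and e = Δ(1)) are mutually inverse: Frobenius extension structures on M correspond bijectively to Frobenius R-coring structures on M. -/

import Mathlib

/-!
STATEMENT 5. For an `R`-bimodule `M` (with `R` commutative acting centrally),
Frobenius extension structures on `M` correspond bijectively to Frobenius
`R`-coring structures on `M`, via `Δ(s) = s·e`, `θ = ε ∘ m` in one direction and
`m(c ⊗ d) = c₍₁₎θ(c₍₂₎ ⊗ d)`, `e = Δ(1)` in the other.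
-/

open TensorProduct

section Defs

variable (R : Type*) [CommRing R] (M : Type*) [AddCommGroup M] [Module R M]

/-- `x ⊗ y ↦ ε(x) • y`. -/
noncomputable def ctrL (ε : M →ₗ[R] R) : M ⊗[R] M →ₗ[R] M :=
  (TensorProduct.lid R M).toLinearMap ∘ₗ LinearMap.rTensor M ε

/-- `x ⊗ y ↦ ε(y) • x`. -/
noncomputable def ctrR (ε : M →ₗ[R] R) : M ⊗[R] M →ₗ[R] M :=
  (TensorProduct.rid R M).toLinearMap ∘ₗ LinearMap.lTensor M ε

/-- `x ⊗ y ↦ θ(y ⊗ d) • x`; composing with `Δ` gives `c ↦ c₍₁₎θ(c₍₂₎ ⊗ d)`. -/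
noncomputable def corL (θ : M ⊗[R] M →ₗ[R] R) (d : M) : M ⊗[R] M →ₗ[R] M :=
  (TensorProduct.rid R M).toLinearMap ∘ₗ
    LinearMap.lTensor M (θ ∘ₗ (TensorProduct.mk R M M).flip d)

variable {R M}

/-- A Frobenius extension structure on the `R`-module `M`: an associative
unital `R`-bilinear multiplication together with a Frobenius system `(e, ε)`. -/
structure FrobExtStructure (R M : Type*) [CommRing R] [AddCommGroup M]
    [Module R M] where
  mul : M →ₗ[R] M →ₗ[R] M
  one : M
  mul_assoc' : ∀ a b c : M, mul (mul a b) c = mul a (mul b c)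
  one_mul' : ∀ a : M, mul one a = a
  mul_one' : ∀ a : M, mul a one = a
  e : M ⊗[R] M
  ε : M →ₗ[R] R
  /-- `e ∈ (M ⊗_R M)^M` : `s·e¹ ⊗ e² = e¹ ⊗ e²·s`. -/
  invariant : ∀ s : M,
    LinearMap.rTensor M (mul s) e = LinearMap.lTensor M (mul.flip s) e
  counit_left : ctrL R M ε e = one
  counit_right : ctrR R M ε e = one

/-- A Frobenius `R`-coring structure on the `R`-module `M`. -/
structure FrobCoringStructure (R M : Type*) [CommRing R] [AddCommGroup M]
    [Module R M] where
  Δ : M →ₗ[R] M ⊗[R] M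
  ε : M →ₗ[R] R
  θ : M ⊗[R] M →ₗ[R] R
  one : M
  coassoc : ∀ c : M, TensorProduct.assoc R M M M (LinearMap.rTensor M Δ (Δ c))
      = LinearMap.lTensor M Δ (Δ c)
  counit_left : ∀ c : M, ctrL R M ε (Δ c) = c
  counit_right : ∀ c : M, ctrR R M ε (Δ c) = c
  /-- `c₍₁₎θ(c₍₂₎ ⊗ d) = θ(c ⊗ d₍₁₎)d₍₂₎`, the right-hand side re-expressed via
  the left-hand formula applied in the other variable. -/
  frob : ∀ c d : M, corL R M θ d (Δ c)
      = (TensorProduct.lid R M) (LinearMap.rTensor M (θ ∘ₗ TensorProduct.mk R M M c) (Δ d))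
  θ_one_left : ∀ c : M, θ (c ⊗ₜ[R] one) = ε c
  θ_one_right : ∀ c : M, θ (one ⊗ₜ[R] c) = ε c

end Defs

/-!
For a Frobenius system `(e, ε)` put `Δ(s) = s e¹ ⊗ e²`. Invariance of `e` says that also
`Δ(s) = e¹ ⊗ e² s`, so `Δ` is a map of `M`-bimodules, and both `(Δ ⊗ 1)Δ(c)` and `(1 ⊗ Δ)Δ(c)`
equal `c f¹ ⊗ f² e¹ ⊗ e²` (with `f` a second copy of `e`).

Conversely, in a Frobenius coring the two expressions `c₍₁₎θ(c₍₂₎ ⊗ d) = θ(c ⊗ d₍₁₎)d₍₂₎` for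
`m(c, d)`, combined with coassociativity, make `Δ` a map of `M`-bimodules:
`Δ(ab) = a₍₁₎ ⊗ a₍₂₎b = ab₍₁₎ ⊗ b₍₂₎`. For `a = 1` or `b = 1` this is the invariance of `Δ(1)`,
associativity of `m` reduces to `θ(ab ⊗ c) = θ(a ⊗ bc)`, and `ε(cd) = θ(cd ⊗ 1) = θ(c ⊗ d)`
closes the round trip.
-/

open LinearMap

section

variable {R M : Type*} [CommRing R] [AddCommGroup M] [Module R M]

@[simp] lemma ctrL_tmul (ε : M →ₗ[R] R) (x y : M) : ctrL R M ε (x ⊗ₜ y) = ε x • y := rfl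

@[simp] lemma ctrR_tmul (ε : M →ₗ[R] R) (x y : M) : ctrR R M ε (x ⊗ₜ y) = ε y • x := rfl

@[simp] lemma corL_tmul (θ : M ⊗[R] M →ₗ[R] R) (d x y : M) :
    corL R M θ d (x ⊗ₜ y) = θ (y ⊗ₜ d) • x := rfl

lemma ctrL_lTensor (ε : M →ₗ[R] R) (f : M →ₗ[R] M) (z : M ⊗[R] M) :
    ctrL R M ε (f.lTensor M z) = f (ctrL R M ε z) := by
  induction z using TensorProduct.induction_on <;> simp_all

lemma ctrL_rTensor (g : M →ₗ[R] R) (f : M →ₗ[R] M) (z : M ⊗[R] M) :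
    ctrL R M g (f.rTensor M z) = ctrL R M (g ∘ₗ f) z := by
  induction z using TensorProduct.induction_on <;> simp_all

lemma ctrR_rTensor (ε : M →ₗ[R] R) (f : M →ₗ[R] M) (z : M ⊗[R] M) :
    ctrR R M ε (f.rTensor M z) = f (ctrR R M ε z) := by
  induction z using TensorProduct.induction_on <;> simp_all

lemma corL_rTensor (θ : M ⊗[R] M →ₗ[R] R) (d : M) (f : M →ₗ[R] M) (z : M ⊗[R] M) :
    corL R M θ d (f.rTensor M z) = f (corL R M θ d z) := by
  induction z using TensorProduct.induction_on <;> simp_all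

lemma rTensor_ctrL_assoc_symm_tmul (g : M →ₗ[R] R) (x : M) (t : M ⊗[R] M) :
    (ctrL R M g).rTensor M ((TensorProduct.assoc R M M M).symm (x ⊗ₜ t)) = g x • t := by
  induction t using TensorProduct.induction_on <;> simp_all [tmul_add, smul_tmul']

lemma lTensor_corL_assoc_tmul (θ : M ⊗[R] M →ₗ[R] R) (d y : M) (t : M ⊗[R] M) :
    (corL R M θ d).lTensor M (TensorProduct.assoc R M M M (t ⊗ₜ y)) = θ (y ⊗ₜ d) • t := by
  induction t using TensorProduct.induction_on <;> simp_all [add_tmul, tmul_smul]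

lemma map_ctrL (D : M →ₗ[R] M ⊗[R] M) (g : M →ₗ[R] R) (z : M ⊗[R] M) :
    D (ctrL R M g z)
      = (ctrL R M g).rTensor M ((TensorProduct.assoc R M M M).symm (D.lTensor M z)) := by
  induction z using TensorProduct.induction_on <;> simp_all [rTensor_ctrL_assoc_symm_tmul]

lemma map_corL (D : M →ₗ[R] M ⊗[R] M) (θ : M ⊗[R] M →ₗ[R] R) (d : M) (z : M ⊗[R] M) :
    D (corL R M θ d z)
      = (corL R M θ d).lTensor M (TensorProduct.assoc R M M M (D.rTensor M z)) := by
  induction z using TensorProduct.induction_on <;> simp_all [lTensor_corL_assoc_tmul]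

lemma assoc_rTensor_rTensor {N : Type*} [AddCommGroup N] [Module R N] (f : M →ₗ[R] N)
    (w : (M ⊗[R] M) ⊗[R] M) :
    TensorProduct.assoc R N M M ((f.rTensor M).rTensor M w)
      = f.rTensor (M ⊗[R] M) (TensorProduct.assoc R M M M w) := by
  induction w using TensorProduct.induction_on with
  | zero => simp
  | add w w' hw hw' => simp only [map_add, hw, hw']
  | tmul t y => induction t using TensorProduct.induction_on <;> simp_all [add_tmul]

/-- Both sides are `f¹ ⊗ B(f², e¹) ⊗ e²`. -/
lemma assoc_rTensor_eq_lTensor (B : M →ₗ[R] M →ₗ[R] M) (e f : M ⊗[R] M)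
    {D₁ D₂ : M →ₗ[R] M ⊗[R] M} (h₁ : ∀ x, D₁ x = (B.flip x).lTensor M f)
    (h₂ : ∀ y, D₂ y = (B y).rTensor M e) :
    TensorProduct.assoc R M M M (D₁.rTensor M e) = D₂.lTensor M f := by
  obtain rfl : D₁ = (lTensorHom M ∘ₗ B.flip).flip f := LinearMap.ext h₁
  obtain rfl : D₂ = (rTensorHom M ∘ₗ B).flip e := LinearMap.ext h₂
  clear h₁ h₂
  induction e using TensorProduct.induction_on with
  | zero => simp
  | add e e' he he' => simp only [map_add, lTensor_add, LinearMap.add_apply, he, he']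
  | tmul a b =>
    induction f using TensorProduct.induction_on with
    | zero => simp
    | add f f' hf hf' => simp only [map_add, rTensor_add, LinearMap.add_apply, hf, hf']
    | tmul c d => simp

attribute [ext] FrobExtStructure FrobCoringStructure

namespace FrobExtStructure

variable (X : FrobExtStructure R M)

noncomputable def Δ : M →ₗ[R] M ⊗[R] M := (rTensorHom M ∘ₗ X.mul).flip X.e

lemma Δ_apply (s : M) : X.Δ s = (X.mul s).rTensor M X.e := rfl

lemma Δ_eq_lTensor (s : M) : X.Δ s = (X.mul.flip s).lTensor M X.e := X.invariant s

lemma Δ_one : X.Δ X.one = X.e := by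
  rw [Δ_apply, show X.mul X.one = LinearMap.id from LinearMap.ext X.one_mul', rTensor_id,
    LinearMap.id_apply]

lemma Δ_comp_mul (c : M) : X.Δ ∘ₗ X.mul c = (X.mul c).rTensor M ∘ₗ X.Δ := by
  ext a
  rw [comp_apply, comp_apply, Δ_apply, Δ_apply, ← comp_apply (rTensor M _), ← rTensor_comp]
  congr 2
  exact LinearMap.ext (X.mul_assoc' c a)

lemma ctrL_Δ (c : M) : ctrL R M X.ε (X.Δ c) = c := by
  rw [Δ_eq_lTensor, ctrL_lTensor, X.counit_left, flip_apply, X.one_mul']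

lemma ctrR_Δ (c : M) : ctrR R M X.ε (X.Δ c) = c := by
  rw [Δ_apply, ctrR_rTensor, X.counit_right, X.mul_one']

lemma coassoc (c : M) :
    TensorProduct.assoc R M M M (X.Δ.rTensor M (X.Δ c)) = X.Δ.lTensor M (X.Δ c) := by
  have key : TensorProduct.assoc R M M M (X.Δ.rTensor M X.e) = X.Δ.lTensor M X.e :=
    assoc_rTensor_eq_lTensor X.mul X.e X.e X.Δ_eq_lTensor X.Δ_apply
  calc TensorProduct.assoc R M M M (X.Δ.rTensor M (X.Δ c))
      = TensorProduct.assoc R M M M (((X.mul c).rTensor M).rTensor M (X.Δ.rTensor M X.e)) := by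
        rw [Δ_apply, ← comp_apply (rTensor M X.Δ), ← rTensor_comp, Δ_comp_mul, rTensor_comp,
          comp_apply]
    _ = (X.mul c).rTensor (M ⊗[R] M) (X.Δ.lTensor M X.e) := by
        rw [assoc_rTensor_rTensor, key]
    _ = X.Δ.lTensor M (X.Δ c) := by
        rw [Δ_apply, ← comp_apply (rTensor _ _), rTensor_comp_lTensor, ← lTensor_comp_rTensor,
          comp_apply]

noncomputable def θ : M ⊗[R] M →ₗ[R] R := X.ε ∘ₗ TensorProduct.lift X.mul

@[simp] lemma θ_tmul (c d : M) : X.θ (c ⊗ₜ d) = X.ε (X.mul c d) := rfl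

lemma corL_θ (d : M) (z : M ⊗[R] M) :
    corL R M X.θ d z = ctrR R M X.ε ((X.mul.flip d).lTensor M z) := by
  induction z using TensorProduct.induction_on <;> simp_all

lemma corL_θ_Δ (c d : M) : corL R M X.θ d (X.Δ c) = X.mul c d := by
  rw [Δ_apply, corL_rTensor, corL_θ, ← X.invariant, ctrR_rTensor, X.counit_right, X.mul_one']

lemma frob (c d : M) :
    corL R M X.θ d (X.Δ c)
      = TensorProduct.lid R M ((X.θ ∘ₗ TensorProduct.mk R M M c).rTensor M (X.Δ d)) := by
  have hθ : (X.θ ∘ₗ TensorProduct.mk R M M c) ∘ₗ X.mul d = X.ε ∘ₗ X.mul (X.mul c d) :=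
    LinearMap.ext fun x => by simp [X.mul_assoc']
  change _ = ctrL R M _ (X.Δ d)
  rw [corL_θ_Δ, Δ_apply, ctrL_rTensor, hθ, ← ctrL_rTensor, ← Δ_apply, ctrL_Δ]

noncomputable def toCoring : FrobCoringStructure R M where
  Δ := X.Δ
  ε := X.ε
  θ := X.θ
  one := X.one
  coassoc := X.coassoc
  counit_left := X.ctrL_Δ
  counit_right := X.ctrR_Δ
  frob := X.frob
  θ_one_left c := by simp [X.mul_one']
  θ_one_right c := by simp [X.one_mul']

end FrobExtStructure

namespace FrobCoringStructure

variable (Y : FrobCoringStructure R M)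

noncomputable def mul : M →ₗ[R] M →ₗ[R] M :=
  TensorProduct.curry ((TensorProduct.rid R M).toLinearMap ∘ₗ Y.θ.lTensor M ∘ₗ
    (TensorProduct.assoc R M M M).toLinearMap ∘ₗ Y.Δ.rTensor M)

lemma mul_apply (c d : M) : Y.mul c d = corL R M Y.θ d (Y.Δ c) := by
  simp only [mul, TensorProduct.curry_apply, comp_apply, LinearEquiv.coe_coe, rTensor_tmul]
  generalize Y.Δ c = z
  induction z using TensorProduct.induction_on <;> simp_all [add_tmul]

lemma mul_eq_ctrL (c d : M) :
    Y.mul c d = ctrL R M (Y.θ ∘ₗ TensorProduct.mk R M M c) (Y.Δ d) := by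
  rw [mul_apply, Y.frob]
  rfl

lemma one_mul (a : M) : Y.mul Y.one a = a := by
  have h : Y.θ ∘ₗ TensorProduct.mk R M M Y.one = Y.ε := LinearMap.ext Y.θ_one_right
  rw [mul_eq_ctrL, h, Y.counit_left]

lemma mul_one (a : M) : Y.mul a Y.one = a := by
  have h (z : M ⊗[R] M) : corL R M Y.θ Y.one z = ctrR R M Y.ε z := by
    induction z using TensorProduct.induction_on <;> simp_all [Y.θ_one_left]
  rw [mul_apply, h, Y.counit_right]

lemma Δ_mul_left (a b : M) : Y.Δ (Y.mul a b) = (Y.mul.flip b).lTensor M (Y.Δ a) := by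
  have h : corL R M Y.θ b ∘ₗ Y.Δ = Y.mul.flip b := LinearMap.ext fun c => (Y.mul_apply c b).symm
  rw [mul_apply, map_corL, Y.coassoc, ← comp_apply (lTensor M _), ← lTensor_comp, h]

lemma Δ_mul_right (a b : M) : Y.Δ (Y.mul a b) = (Y.mul a).rTensor M (Y.Δ b) := by
  have h : ctrL R M (Y.θ ∘ₗ TensorProduct.mk R M M a) ∘ₗ Y.Δ = Y.mul a :=
    LinearMap.ext fun d => (Y.mul_eq_ctrL a d).symm
  rw [mul_eq_ctrL, map_ctrL, ← Y.coassoc, LinearEquiv.symm_apply_apply,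
    ← comp_apply (rTensor M _), ← rTensor_comp, h]

lemma θ_mul_tmul (x b c : M) : Y.θ (Y.mul x b ⊗ₜ c) = Y.θ (x ⊗ₜ Y.mul b c) := by
  rw [mul_eq_ctrL, mul_apply]
  generalize Y.Δ b = z
  induction z using TensorProduct.induction_on with
  | zero => simp
  | add z z' hz hz' => simp only [map_add, add_tmul, tmul_add, hz, hz']
  | tmul p q =>
    simp only [ctrL_tmul, corL_tmul, comp_apply, TensorProduct.mk_apply, ← smul_tmul',
      tmul_smul, map_smul, smul_eq_mul]
    ring

lemma mul_assoc (a b c : M) : Y.mul (Y.mul a b) c = Y.mul a (Y.mul b c) := by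
  have h (z : M ⊗[R] M) :
      corL R M Y.θ c ((Y.mul.flip b).lTensor M z) = corL R M Y.θ (Y.mul b c) z := by
    induction z using TensorProduct.induction_on <;> simp_all [θ_mul_tmul]
  rw [mul_apply, Δ_mul_left, h, ← mul_apply]

lemma ε_mul (c d : M) : Y.ε (Y.mul c d) = Y.θ (c ⊗ₜ d) := by
  rw [← Y.θ_one_left, θ_mul_tmul, mul_one]

noncomputable def toExt : FrobExtStructure R M where
  mul := Y.mul
  one := Y.one
  mul_assoc' := Y.mul_assoc
  one_mul' := Y.one_mul
  mul_one' := Y.mul_one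
  e := Y.Δ Y.one
  ε := Y.ε
  invariant s := by
    rw [← Δ_mul_right, ← Δ_mul_left, mul_one, one_mul]
  counit_left := Y.counit_left Y.one
  counit_right := Y.counit_right Y.one

end FrobCoringStructure

lemma FrobExtStructure.toExt_toCoring (X : FrobExtStructure R M) : X.toCoring.toExt = X := by
  ext c d
  · exact (X.toCoring.mul_apply c d).trans (X.corL_θ_Δ c d)
  · rfl
  · exact X.Δ_one
  · rfl

lemma FrobCoringStructure.toCoring_toExt (Y : FrobCoringStructure R M) :
    Y.toExt.toCoring = Y := by
  ext s
  · exact (Y.Δ_mul_right s Y.one).symm.trans (congrArg Y.Δ (Y.mul_one s))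
  · rfl
  · exact Y.ε_mul _ _
  · rfl

noncomputable def frobEquiv : FrobExtStructure R M ≃ FrobCoringStructure R M where
  toFun := FrobExtStructure.toCoring
  invFun := FrobCoringStructure.toExt
  left_inv := FrobExtStructure.toExt_toCoring
  right_inv := FrobCoringStructure.toCoring_toExt

end

/-- Frobenius extension structures on `M` correspond bijectively to Frobenius
`R`-coring structures on `M`; the bijection and its inverse are given by the
usual formulas `Δ(s) = s·e`, `θ = ε ∘ m`, respectively `e = Δ(1)`,
`m(c ⊗ d) = c₍₁₎θ(c₍₂₎ ⊗ d)` (and `ε`, `1` are preserved). -/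
theorem frobExt_equiv_frobCoring
    (R M : Type*) [CommRing R] [AddCommGroup M] [Module R M] :
    ∃ Φ : FrobExtStructure R M ≃ FrobCoringStructure R M,
      (∀ X : FrobExtStructure R M,
        (Φ X).ε = X.ε ∧ (Φ X).one = X.one ∧
        (∀ s : M, (Φ X).Δ s = LinearMap.rTensor M (X.mul s) X.e) ∧
        (Φ X).θ = X.ε ∘ₗ TensorProduct.lift X.mul) ∧
      (∀ Y : FrobCoringStructure R M,
        (Φ.symm Y).ε = Y.ε ∧ (Φ.symm Y).one = Y.one ∧
        (Φ.symm Y).e = Y.Δ Y.one ∧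
        (∀ c d : M, (Φ.symm Y).mul c d = corL R M Y.θ d (Y.Δ c))) :=
  ⟨frobEquiv, fun _ => ⟨rfl, rfl, fun _ => rfl, rfl⟩,
    fun Y => ⟨rfl, rfl, rfl, Y.mul_apply⟩⟩
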